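/- arXiv:1710.04263 — 3 statements merged into one kernel-verified Lean document; each statement's English description precedes it below -/
import Mathlib

section
/- The intersection G₁ ∩ G₂ of two n-ary convexities on X is an n-ary convexity on X. -/
def hullOf {X : Type*} (G : Set (Set X)) (A : Set X) : Set X :=
  ⋂₀ {C | C ∈ G ∧ A ⊆ C}

def IsConvexity {X : Type*} (G : Set (Set X)) : Prop :=
  Set.univ ∈ G ∧ ∀ S ⊆ G, ⋂₀ S ∈ G

/-- A convexity is `n`-ary if membership can be tested on subsets of
cardinality at most `n`. -/
def IsNary {X : Type*} (G : Set (Set X)) (n : ℕ) : Prop :=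
  ∀ A : Set X, A ∈ G ↔ ∀ B ⊆ A, B.encard ≤ n → hullOf G B ⊆ A

lemma hullOf_anti {X : Type*} {G G' : Set (Set X)} (h : G ⊆ G') (A : Set X) :
    hullOf G' A ⊆ hullOf G A := by
  intro x hx C hC
  exact hx C ⟨h hC.1, hC.2⟩

lemma hullOf_subset {X : Type*} {G : Set (Set X)} {A C : Set X}
    (hC : C ∈ G) (hAC : A ⊆ C) : hullOf G A ⊆ C :=
  Set.sInter_subset_of_mem ⟨hC, hAC⟩

theorem stmt2 {X : Type*} (n : ℕ) (G₁ G₂ : Set (Set X))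
    (h₁ : IsConvexity G₁) (h₂ : IsConvexity G₂)
    (hn₁ : IsNary G₁ n) (hn₂ : IsNary G₂ n) :
    IsConvexity (G₁ ∩ G₂) ∧ IsNary (G₁ ∩ G₂) n := by
  refine ⟨⟨⟨h₁.1, h₂.1⟩, fun S hS => ⟨h₁.2 S (fun s hs => (hS hs).1),
      h₂.2 S (fun s hs => (hS hs).2)⟩⟩, ?_⟩
  intro A
  constructor
  · intro hA B hB _
    exact hullOf_subset hA hB
  · intro h
    constructor
    · exact (hn₁ A).2 fun B hB hcard =>
        (hullOf_anti Set.inter_subset_left B).trans (h B hB hcard)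
    · exact (hn₂ A).2 fun B hB hcard =>
        (hullOf_anti Set.inter_subset_right B).trans (h B hB hcard)
end

section
/- If G₁ and G₂ are 3-ary, finitely defined, conically independent convexities on X, then every set A in the fractoconvexity (3)-1/{G₁,G₂} satisfies A = co₁(A) ∩ co₂(A); i.e., G₁ and G₂ are independent. -/
def FinitelyDefined {X : Type*} (co : Set X → Set X) : Prop :=
  ∀ A : Set X, co A = ⋃ B ∈ {B : Set X | B ⊆ A ∧ B.Finite}, co B

def ConicallyIndep {X : Type*} (co₁ co₂ : Set X → Set X) : Prop :=
  ∀ m : ℕ, 3 ≤ m → ∀ x : Fin (m + 1) → X,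
    ∀ p ∈ co₁ (Set.range x) ∩ co₂ (Set.range x),
      ∃ y₁ ∈ co₁ (Set.range (x ∘ Fin.castSucc)) ∩ co₂ (Set.range (x ∘ Fin.castSucc)),
      ∃ y₂ ∈ co₁ (Set.range (x ∘ Fin.castSucc)) ∩ co₂ (Set.range (x ∘ Fin.castSucc)),
        p ∈ co₁ {y₁, x (Fin.last m)} ∩ co₂ {y₂, x (Fin.last m)}

lemma hull_mono {X : Type*} (G : Set (Set X)) {A B : Set X} (h : A ⊆ B) :
    hullOf G A ⊆ hullOf G B := fun x hx C hC => hx C ⟨hC.1, h.trans hC.2⟩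

lemma subset_hull {X : Type*} (G : Set (Set X)) (A : Set X) : A ⊆ hullOf G A :=
  fun x hx C hC => hC.2 hx

theorem stmt12 {X : Type*} (G₁ G₂ : Set (Set X))
    (hc₁ : IsConvexity G₁) (hc₂ : IsConvexity G₂)
    (h3₁ : IsNary G₁ 3) (h3₂ : IsNary G₂ 3)
    (hf₁ : FinitelyDefined (hullOf G₁)) (hf₂ : FinitelyDefined (hullOf G₂))
    (hci : ConicallyIndep (hullOf G₁) (hullOf G₂))
    (A : Set X)
    (hA : ∀ B ⊆ A, B.encard ≤ 3 → hullOf G₁ B ⊆ A ∨ hullOf G₂ B ⊆ A) :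
    A = hullOf G₁ A ∩ hullOf G₂ A := by
  have key : ∀ n : ℕ, ∀ F : Set X, F.Finite → F.ncard ≤ n → F ⊆ A →
      hullOf G₁ F ∩ hullOf G₂ F ⊆ A := by
    intro n
    induction n using Nat.strong_induction_on with
    | _ n IH =>
      intro F hF hcard hFA p hp
      by_cases h3 : F.ncard ≤ 3
      · have henc : F.encard ≤ 3 := by
          rw [show ((3:ℕ∞)) = ((3:ℕ):ℕ∞) by norm_num, Set.encard_le_coe_iff_finite_ncard_le]
          exact ⟨hF, h3⟩
        rcases hA F hFA henc with h | h
        · exact h hp.1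
        · exact h hp.2
      · push_neg at h3
        obtain ⟨k, f, hf⟩ := hF.fin_embedding
        have hk : k = F.ncard := by
          rw [← hf, ← Nat.card_coe_set_eq, Nat.card_range_of_injective f.injective]
          simp
        obtain ⟨m, hm⟩ : ∃ m, k = m + 1 := ⟨k - 1, by omega⟩
        have hm3 : 3 ≤ m := by omega
        set x : Fin (m + 1) → X := fun i => f (i.cast hm.symm) with hx
        have hxr : Set.range x = F := by
          rw [← hf]
          ext a
          constructor
          · rintro ⟨i, rfl⟩; exact ⟨i.cast hm.symm, rfl⟩
          · rintro ⟨i, rfl⟩; exact ⟨i.cast hm, rfl⟩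
        have hp' : p ∈ hullOf G₁ (Set.range x) ∩ hullOf G₂ (Set.range x) := by
          rw [hxr]; exact hp
        obtain ⟨y₁, hy₁, y₂, hy₂, hpc⟩ := hci m hm3 x p hp'
        set F' := Set.range (x ∘ Fin.castSucc) with hF'
        have hF'sub : F' ⊆ F := by
          rw [← hxr]; exact Set.range_comp_subset_range _ _
        have hF'card : F'.ncard ≤ m := by
          calc F'.ncard = (x '' Set.range Fin.castSucc).ncard := by
                rw [hF', Set.range_comp]
            _ ≤ (Set.range (Fin.castSucc : Fin m → Fin (m+1))).ncard :=
                Set.ncard_image_le (Set.finite_range _)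
            _ = m := by
                rw [← Nat.card_coe_set_eq,
                  Nat.card_range_of_injective (Fin.castSucc_injective m)]
                simp
        have hmn : m < n := by omega
        have hy₁A : y₁ ∈ A := IH m hmn F' (Set.finite_range _) hF'card (hF'sub.trans hFA) hy₁
        have hy₂A : y₂ ∈ A := IH m hmn F' (Set.finite_range _) hF'card (hF'sub.trans hFA) hy₂
        have hlast : x (Fin.last m) ∈ A := hFA (hxr ▸ Set.mem_range_self _)
        set B : Set X := {y₁, y₂, x (Fin.last m)} with hB
        have hBA : B ⊆ A := by
          intro z hz
          rcases hz with rfl | rfl | rfl <;> assumption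
        have hBenc : B.encard ≤ 3 := by
          calc B.encard ≤ ({y₂, x (Fin.last m)} : Set X).encard + 1 :=
              Set.encard_insert_le _ _
            _ ≤ 1 + 1 + 1 := by
                gcongr
                exact (Set.encard_insert_le _ _).trans (by simp)
            _ = 3 := by norm_num
        have hs₁ : ({y₁, x (Fin.last m)} : Set X) ⊆ B := by
          intro z hz
          rcases hz with rfl | rfl
          · exact Or.inl rfl
          · exact Or.inr (Or.inr rfl)
        have hs₂ : ({y₂, x (Fin.last m)} : Set X) ⊆ B := by
          intro z hz
          rcases hz with rfl | rfl
          · exact Or.inr (Or.inl rfl)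
          · exact Or.inr (Or.inr rfl)
        rcases hA B hBA hBenc with h | h
        · exact h (hull_mono G₁ hs₁ hpc.1)
        · exact h (hull_mono G₂ hs₂ hpc.2)
  apply Set.Subset.antisymm
  · exact Set.subset_inter (subset_hull G₁ A) (subset_hull G₂ A)
  · rintro p ⟨hp₁, hp₂⟩
    rw [hf₁ A] at hp₁
    rw [hf₂ A] at hp₂
    simp only [Set.mem_iUnion] at hp₁ hp₂
    obtain ⟨B₁, ⟨hB₁A, hB₁f⟩, hpB₁⟩ := hp₁
    obtain ⟨B₂, ⟨hB₂A, hB₂f⟩, hpB₂⟩ := hp₂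
    have hF : (B₁ ∪ B₂).Finite := hB₁f.union hB₂f
    exact key (B₁ ∪ B₂).ncard (B₁ ∪ B₂) hF le_rfl (Set.union_subset hB₁A hB₂A)
      ⟨hull_mono G₁ Set.subset_union_left hpB₁, hull_mono G₂ Set.subset_union_right hpB₂⟩
end

section
/- Let f : ℤ → ℤ be a bijection, G₁ the standard convexity on ℤ (intersections of real intervals with ℤ) with hull co₁, and G₂ the f-transported convexity with hull co₂(A) = f(co₁(f⁻¹(A))). If A ⊆ ℤ is bounded and 2-semiconvex with respect to G₁ and G₂ (i.e., for all x₁, x₂ ∈ A, co₁{x₁,x₂} ⊆ A or co₂{x₁,x₂} ⊆ A), then A = co₁(A) ∩ co₂(A). -/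
/-- The standard convexity on ℤ: traces on ℤ of convex subsets of ℝ. -/
def intConvexity : Set (Set ℤ) :=
  {S | ∃ A : Set ℝ, Convex ℝ A ∧ S = (fun z : ℤ => (z : ℝ)) ⁻¹' A}

/-- The standard hull on ℤ. -/
noncomputable def co₁ : Set ℤ → Set ℤ := hullOf intConvexity

/-- The `f`-transported hull on ℤ: `co₂(A) = f(co₁(f⁻¹(A)))`. -/
noncomputable def co₂ (f : ℤ ≃ ℤ) (A : Set ℤ) : Set ℤ :=
  f '' co₁ (f.symm '' A)

lemma subset_co₁ (A : Set ℤ) : A ⊆ co₁ A := by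
  intro z hz
  intro C hC
  exact hC.2 hz

lemma mem_co₁_aux {A : Set ℤ} {s t z : ℤ} (hs : s ∈ A) (ht : t ∈ A)
    (h1 : s ≤ z) (h2 : z ≤ t) : z ∈ co₁ A := by
  intro C hC
  obtain ⟨⟨R, hR, hCR⟩, hsub⟩ := hC
  subst hCR
  have hz : (z : ℝ) ∈ Set.Icc (s : ℝ) (t : ℝ) :=
    ⟨by exact_mod_cast h1, by exact_mod_cast h2⟩
  exact hR.ordConnected.out (hsub hs) (hsub ht) hz

lemma co₁_subset_Icc {A : Set ℤ} {m M : ℤ} (h : A ⊆ Set.Icc m M) :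
    co₁ A ⊆ Set.Icc m M := by
  intro z hz
  have hmem : Set.Icc m M ∈ {C | C ∈ intConvexity ∧ A ⊆ C} := by
    refine ⟨⟨Set.Icc (m : ℝ) (M : ℝ), convex_Icc _ _, ?_⟩, h⟩
    ext a
    simp [Int.cast_le]
  exact hz _ hmem

lemma exists_lt_gt_of_mem_co₁ {A : Set ℤ} {z : ℤ}
    (hbl : BddBelow A) (hbu : BddAbove A) (hzc : z ∈ co₁ A) (hz : z ∉ A) :
    (∃ s ∈ A, s < z) ∧ (∃ t ∈ A, z < t) := by
  obtain ⟨lo, hlo⟩ := hbl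
  obtain ⟨hi, hhi⟩ := hbu
  constructor
  · by_contra h
    push_neg at h
    have hsub : A ⊆ Set.Icc (z + 1) hi := by
      intro a ha
      have h1 : z ≤ a := h a ha
      have h2 : z ≠ a := fun e => hz (e ▸ ha)
      exact ⟨by omega, hhi ha⟩
    have := co₁_subset_Icc hsub hzc
    have := this.1
    omega
  · by_contra h
    push_neg at h
    have hsub : A ⊆ Set.Icc lo (z - 1) := by
      intro a ha
      have h1 : a ≤ z := h a ha
      have h2 : a ≠ z := fun e => hz (e ▸ ha)
      exact ⟨hlo ha, by omega⟩
    have := co₁_subset_Icc hsub hzc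
    have := this.2
    omega

lemma mem_co₂_pair_iff (f : ℤ ≃ ℤ) (s t z : ℤ) :
    z ∈ co₂ f {s, t} ↔ f.symm z ∈ co₁ {f.symm s, f.symm t} := by
  unfold co₂
  rw [Set.image_pair]
  exact Set.mem_image_equiv

theorem stmt16 (f : ℤ ≃ ℤ) (A : Set ℤ)
    (hbdd : BddBelow A ∧ BddAbove A)
    (hsemi : ∀ x₁ ∈ A, ∀ x₂ ∈ A,
      co₁ {x₁, x₂} ⊆ A ∨ co₂ f {x₁, x₂} ⊆ A) :
    A = co₁ A ∩ co₂ f A := by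
  apply Set.Subset.antisymm
  · intro z hzA
    refine ⟨subset_co₁ A hzA, ?_⟩
    exact ⟨f.symm z, subset_co₁ _ ⟨z, hzA, rfl⟩, f.apply_symm_apply z⟩
  intro z ⟨hz1, hz2⟩
  by_contra hz
  set w := f.symm z with hw
  -- side conditions
  obtain ⟨⟨s₀, hs₀A, hs₀⟩, ⟨t₀, ht₀A, ht₀⟩⟩ :=
    exists_lt_gt_of_mem_co₁ hbdd.1 hbdd.2 hz1 hz
  -- B = f.symm '' A
  have hwB : w ∈ co₁ (f.symm '' A) := Set.mem_image_equiv.mp hz2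
  have hwnB : w ∉ f.symm '' A := by
    rintro ⟨a, haA, hae⟩
    exact hz (by rwa [f.symm.injective hae] at haA)
  have hAfin : A.Finite := by
    obtain ⟨lo, hlo⟩ := hbdd.1
    obtain ⟨hi, hhi⟩ := hbdd.2
    exact (Set.finite_Icc lo hi).subset (fun a ha => ⟨hlo ha, hhi ha⟩)
  have hBfin : (f.symm '' A).Finite := hAfin.image _
  obtain ⟨⟨u', hu'B, hu'⟩, ⟨v', hv'B, hv'⟩⟩ :=
    exists_lt_gt_of_mem_co₁ hBfin.bddBelow hBfin.bddAbove hwB hwnB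
  obtain ⟨u, huA, rfl⟩ := hu'B
  obtain ⟨v, hvA, rfl⟩ := hv'B
  -- key lemma 1 : points straddling z have f.symm-images on the same side of w
  have hne : ∀ a, a ≠ z → f.symm a ≠ w := by
    intro a ha he
    exact ha (f.symm.injective (he.trans hw))
  have key1 : ∀ s ∈ A, ∀ t ∈ A, s < z → z < t →
      (f.symm s < w ∧ f.symm t < w) ∨ (w < f.symm s ∧ w < f.symm t) := by
    intro s hs t ht h1 h2
    have hzin : z ∈ co₁ ({s, t} : Set ℤ) :=
      mem_co₁_aux (Set.mem_insert _ _) (Set.mem_insert_of_mem _ rfl) h1.le h2.le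
    have hco2 : co₂ f {s, t} ⊆ A :=
      (hsemi s hs t ht).resolve_left (fun h => hz (h hzin))
    have hns := hne s h1.ne
    have hnt := hne t h2.ne'
    rcases lt_or_gt_of_ne hns with hsw | hsw <;>
      rcases lt_or_gt_of_ne hnt with htw | htw
    · exact Or.inl ⟨hsw, htw⟩
    · exfalso
      have : w ∈ co₁ ({f.symm s, f.symm t} : Set ℤ) :=
        mem_co₁_aux (Set.mem_insert _ _) (Set.mem_insert_of_mem _ rfl) hsw.le htw.le
      exact hz (hco2 ((mem_co₂_pair_iff f s t z).mpr this))
    · exfalso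
      have : w ∈ co₁ ({f.symm s, f.symm t} : Set ℤ) :=
        mem_co₁_aux (Set.mem_insert_of_mem _ rfl) (Set.mem_insert _ _) htw.le hsw.le
      exact hz (hco2 ((mem_co₂_pair_iff f s t z).mpr this))
    · exact Or.inr ⟨hsw, htw⟩
  -- key lemma 2 : points with f.symm-images straddling w are on the same side of z
  have key2 : ∀ s ∈ A, ∀ t ∈ A, f.symm s < w → w < f.symm t →
      (s < z ∧ t < z) ∨ (z < s ∧ z < t) := by
    intro s hs t ht h1 h2
    have hzin : z ∈ co₂ f ({s, t} : Set ℤ) := by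
      refine (mem_co₂_pair_iff f s t z).mpr ?_
      exact mem_co₁_aux (Set.mem_insert _ _) (Set.mem_insert_of_mem _ rfl) h1.le h2.le
    have hco1 : co₁ {s, t} ⊆ A :=
      (hsemi s hs t ht).resolve_right (fun h => hz (h hzin))
    have hns : s ≠ z := fun e => hz (e ▸ hs)
    have hnt : t ≠ z := fun e => hz (e ▸ ht)
    rcases lt_or_gt_of_ne hns with hsz | hsz <;>
      rcases lt_or_gt_of_ne hnt with htz | htz
    · exact Or.inl ⟨hsz, htz⟩
    · exfalso
      exact hz (hco1 (mem_co₁_aux (Set.mem_insert _ _)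
        (Set.mem_insert_of_mem _ rfl) hsz.le htz.le))
    · exfalso
      exact hz (hco1 (mem_co₁_aux (Set.mem_insert_of_mem _ rfl)
        (Set.mem_insert _ _) htz.le hsz.le))
    · exact Or.inr ⟨hsz, htz⟩
  -- final case analysis
  have hnsw := hne s₀ hs₀.ne
  rcases lt_or_gt_of_ne hnsw with hsw | hsw
  · -- f.symm s₀ < w
    have htw : f.symm t₀ < w := by
      rcases key1 s₀ hs₀A t₀ ht₀A hs₀ ht₀ with ⟨_, h⟩ | ⟨h, _⟩
      · exact h
      · exact absurd h (by omega)
    have hvz : v < z := by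
      rcases key2 s₀ hs₀A v hvA hsw hv' with ⟨_, h⟩ | ⟨h, _⟩
      · exact h
      · exact absurd h (by omega)
    rcases key1 v hvA t₀ ht₀A hvz ht₀ with ⟨h, _⟩ | ⟨_, h⟩
    · omega
    · omega
  · -- w < f.symm s₀
    have huz : u < z := by
      rcases key2 u huA s₀ hs₀A hu' hsw with ⟨h, _⟩ | ⟨_, h⟩
      · exact h
      · exact absurd h (by omega)
    have htw : f.symm t₀ < w := by
      rcases key1 u huA t₀ ht₀A huz ht₀ with ⟨_, h⟩ | ⟨h, _⟩
      · exact h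
      · exact absurd h (by omega)
    rcases key2 t₀ ht₀A s₀ hs₀A htw hsw with ⟨h, _⟩ | ⟨_, h⟩
    · omega
    · omega
end
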